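/- Let G be a connected finite simple graph of order n ≥ 12 in which every pair of distinct nonadjacent vertices has degree sum at least n − 2. Let I be a set of maximum cardinality among all closures ⟨A⟩ of two-element sets A ⊆ V(G) under 2-neighbor bootstrap percolation, and let U = V(G) ∖ I. Then |I| > n/2 and the subgraph of G induced by U is complete. -/
import Mathlib

open Finset
open scoped Classical

noncomputable def bootStep {V : Type*} [Fintype V] (G : SimpleGraph V) (r : ℕ)
    (A : Finset V) : Finset V :=
  A ∪ Finset.univ.filter (fun v => r ≤ (G.neighborFinset v ∩ A).card)

noncomputable def bootClosure {V : Type*} [Fintype V] (G : SimpleGraph V) (r : ℕ)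
    (A : Finset V) : Finset V :=
  (bootStep G r)^[Fintype.card V] A

def Percolates {V : Type*} [Fintype V] (G : SimpleGraph V) (r : ℕ)
    (A : Finset V) : Prop :=
  ∃ t : ℕ, (bootStep G r)^[t] A = Finset.univ

noncomputable def minContagious {V : Type*} [Fintype V] (G : SimpleGraph V) (r : ℕ) : ℕ :=
  sInf {k : ℕ | ∃ A : Finset V, A.card = k ∧ Percolates G r A}

section Aux
variable {V : Type*} [Fintype V] (G : SimpleGraph V)

lemma subset_bootStep (r : ℕ) (A : Finset V) : A ⊆ bootStep G r A :=
  Finset.subset_union_left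

lemma subset_iterate (r : ℕ) (A : Finset V) (t : ℕ) : A ⊆ (bootStep G r)^[t] A := by
  induction t with
  | zero => simp
  | succ t ih =>
    rw [Function.iterate_succ_apply']
    exact ih.trans (subset_bootStep G r _)

lemma subset_bootClosure (r : ℕ) (A : Finset V) : A ⊆ bootClosure G r A :=
  subset_iterate G r A _

lemma bootClosure_fixed (r : ℕ) (A : Finset V) :
    bootStep G r (bootClosure G r A) = bootClosure G r A := by
  by_contra hne
  have key : ∀ t, t ≤ Fintype.card V + 1 → t ≤ ((bootStep G r)^[t] A).card := by
    intro t
    induction t with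
    | zero => intro _; exact Nat.zero_le _
    | succ t ih =>
      intro ht
      have ht' : t ≤ Fintype.card V := by omega
      have hne' : (bootStep G r)^[t] A ≠ (bootStep G r)^[t+1] A := by
        intro heq
        apply hne
        have hfix : bootStep G r ((bootStep G r)^[t] A) = (bootStep G r)^[t] A :=
          (Function.iterate_succ_apply' (bootStep G r) t A).symm.trans heq.symm
        have h1 : bootClosure G r A = (bootStep G r)^[t] A := by
          have : (Fintype.card V - t) + t = Fintype.card V := by omega
          rw [bootClosure, ← this, Function.iterate_add_apply,
            Function.iterate_fixed hfix]
        rw [h1, hfix]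
      have hsub : (bootStep G r)^[t] A ⊆ (bootStep G r)^[t+1] A := by
        rw [Function.iterate_succ_apply']
        exact subset_bootStep G r _
      have := Finset.card_lt_card (Finset.ssubset_iff_subset_ne.2 ⟨hsub, hne'⟩)
      have := ih (by omega)
      omega
  have h1 := key (Fintype.card V + 1) le_rfl
  have h2 := Finset.card_le_univ ((bootStep G r)^[Fintype.card V + 1] A)
  omega

lemma mem_of_closed_two {S : Finset V} (hS : bootStep G 2 S = S) {v x y : V}
    (hx : x ∈ S) (hy : y ∈ S) (hxy : x ≠ y) (hvx : G.Adj v x) (hvy : G.Adj v y) :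
    v ∈ S := by
  rw [← hS]
  apply Finset.mem_union_right
  rw [Finset.mem_filter]
  refine ⟨Finset.mem_univ v, ?_⟩
  have hsub : ({x, y} : Finset V) ⊆ G.neighborFinset v ∩ S := by
    intro z hz
    rw [Finset.mem_insert, Finset.mem_singleton] at hz
    rcases hz with rfl | rfl
    · exact Finset.mem_inter.2 ⟨(G.mem_neighborFinset v z).2 hvx, hx⟩
    · exact Finset.mem_inter.2 ⟨(G.mem_neighborFinset v z).2 hvy, hy⟩
  calc 2 = ({x, y} : Finset V).card := (Finset.card_pair hxy).symm
  _ ≤ _ := Finset.card_le_card hsub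

set_option linter.unusedSectionVars false in
lemma walk_cross {S : Finset V} :
    ∀ {x y : V}, G.Walk x y → x ∈ S → y ∉ S →
      ∃ p q, G.Adj p q ∧ p ∈ S ∧ q ∉ S := by
  intro x y w
  induction w with
  | nil => intro h h'; exact absurd h h'
  | @cons a b c h p ih =>
    intro hx hy
    by_cases hb : b ∈ S
    · exact ih hb hy
    · exact ⟨a, b, h, hx, hb⟩

end Aux

theorem stmt6 {V : Type*} [Fintype V] (G : SimpleGraph V)
    (hconn : G.Connected) (hn : 12 ≤ Fintype.card V)
    (hdeg : ∀ x y : V, x ≠ y → ¬ G.Adj x y →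
      Fintype.card V - 2 ≤ G.degree x + G.degree y)
    (I : Finset V)
    (hIcl : ∃ A : Finset V, A.card = 2 ∧ I = bootClosure G 2 A)
    (hImax : ∀ A : Finset V, A.card = 2 → (bootClosure G 2 A).card ≤ I.card) :
    Fintype.card V < 2 * I.card ∧
    ∀ u ∈ Finset.univ \ I, ∀ w ∈ Finset.univ \ I, u ≠ w → G.Adj u w := by
  obtain ⟨A₀, hA₀, hIA₀⟩ := hIcl
  have hIfix : bootStep G 2 I = I := by rw [hIA₀]; exact bootClosure_fixed G 2 A₀
  have hUfcard : (univ \ I : Finset V).card + I.card = Fintype.card V := by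
    have h1 := Finset.card_le_univ I
    rw [Finset.card_sdiff_of_subset (Finset.subset_univ I), Finset.card_univ]
    omega
  have hdsplit : ∀ v : V,
      G.degree v = (G.neighborFinset v ∩ I).card + (G.neighborFinset v \ I).card := by
    intro v
    exact (Finset.card_inter_add_card_sdiff (G.neighborFinset v) I).symm
  have hclosed : ∀ v, v ∉ I → (G.neighborFinset v ∩ I).card ≤ 1 := by
    intro v hv
    by_contra h
    push_neg at h
    apply hv
    have : v ∈ bootStep G 2 I :=
      Finset.mem_union_right _ (Finset.mem_filter.2 ⟨Finset.mem_univ v, by omega⟩)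
    rwa [hIfix] at this
  -- |I| ≥ 3
  have hk3 : 3 ≤ I.card := by
    have hex : ∃ v x y : V, x ≠ y ∧ G.Adj v x ∧ G.Adj v y := by
      by_cases hc : ∀ x y : V, x ≠ y → G.Adj x y
      · obtain ⟨x, y, hxy⟩ := Fintype.exists_pair_of_one_lt_card (α := V) (by omega)
        have hcard : 0 < (univ \ ({x, y} : Finset V)).card := by
          rw [Finset.card_sdiff_of_subset (Finset.subset_univ _), Finset.card_univ,
            Finset.card_pair hxy]
          omega
        obtain ⟨v, hv⟩ := Finset.card_pos.1 hcard
        have hv' := (Finset.mem_sdiff.1 hv).2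
        rw [Finset.mem_insert, Finset.mem_singleton] at hv'
        push_neg at hv'
        exact ⟨v, x, y, hxy, hc v x hv'.1, hc v y hv'.2⟩
      · push_neg at hc
        obtain ⟨x, y, hxy, hnadj⟩ := hc
        have hore := hdeg x y hxy hnadj
        by_cases hx2 : 2 ≤ G.degree x
        · obtain ⟨p, hp, q, hq, hpq⟩ := Finset.one_lt_card.1 hx2
          exact ⟨x, p, q, hpq, (G.mem_neighborFinset x p).1 hp,
            (G.mem_neighborFinset x q).1 hq⟩
        · have hy2 : 2 ≤ G.degree y := by omega
          obtain ⟨p, hp, q, hq, hpq⟩ := Finset.one_lt_card.1 hy2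
          exact ⟨y, p, q, hpq, (G.mem_neighborFinset y p).1 hp,
            (G.mem_neighborFinset y q).1 hq⟩
    obtain ⟨v, x, y, hxy, hvx, hvy⟩ := hex
    have hvK : v ∈ bootClosure G 2 {x, y} :=
      mem_of_closed_two G (bootClosure_fixed G 2 _)
        (subset_bootClosure G 2 _ (Finset.mem_insert_self x {y}))
        (subset_bootClosure G 2 _ (by simp)) hxy hvx hvy
    have hsub : ({v, x, y} : Finset V) ⊆ bootClosure G 2 {x, y} := by
      intro z hz
      rw [Finset.mem_insert, Finset.mem_insert, Finset.mem_singleton] at hz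
      rcases hz with rfl | rfl | rfl
      · exact hvK
      · exact subset_bootClosure G 2 _ (Finset.mem_insert_self z {y})
      · exact subset_bootClosure G 2 _ (by simp)
    have hcard3 : ({v, x, y} : Finset V).card = 3 := by
      rw [Finset.card_insert_of_notMem, Finset.card_pair hxy]
      simp only [Finset.mem_insert, Finset.mem_singleton]
      push_neg
      exact ⟨G.ne_of_adj hvx, G.ne_of_adj hvy⟩
    calc 3 = ({v, x, y} : Finset V).card := hcard3.symm
    _ ≤ (bootClosure G 2 {x, y}).card := Finset.card_le_card hsub
    _ ≤ I.card := hImax _ (Finset.card_pair hxy)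
  -- U induces a clique
  have hclique : ∀ u ∈ (univ \ I : Finset V), ∀ w ∈ (univ \ I : Finset V),
      u ≠ w → G.Adj u w := by
    by_contra hcon
    push_neg at hcon
    obtain ⟨u, hu, w, hw, huw, hnadj⟩ := hcon
    have huI : u ∉ I := (Finset.mem_sdiff.1 hu).2
    have hwI : w ∉ I := (Finset.mem_sdiff.1 hw).2
    have hnadj' : ¬ G.Adj w u := fun h => hnadj h.symm
    set s : Finset V := G.neighborFinset u \ I with hs_def
    set t : Finset V := G.neighborFinset w \ I with ht_def
    set C : Finset V := s ∩ t with hC_def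
    have hadjs : ∀ z ∈ s, G.Adj u z := fun z hz =>
      (G.mem_neighborFinset u z).1 (Finset.mem_sdiff.1 hz).1
    have hadjt : ∀ z ∈ t, G.Adj w z := fun z hz =>
      (G.mem_neighborFinset w z).1 (Finset.mem_sdiff.1 hz).1
    have hsU : s ⊆ univ \ I := fun z hz =>
      Finset.mem_sdiff.2 ⟨Finset.mem_univ z, (Finset.mem_sdiff.1 hz).2⟩
    have htU : t ⊆ univ \ I := fun z hz =>
      Finset.mem_sdiff.2 ⟨Finset.mem_univ z, (Finset.mem_sdiff.1 hz).2⟩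
    have hadjCu : ∀ c ∈ C, G.Adj u c := fun c hc => hadjs c (Finset.mem_inter.1 hc).1
    have hadjCw : ∀ c ∈ C, G.Adj w c := fun c hc => hadjt c (Finset.mem_inter.1 hc).2
    have hCU : C ⊆ univ \ I := fun c hc => hsU (Finset.mem_inter.1 hc).1
    have hCI : ∀ c ∈ C, c ∉ I := fun c hc => (Finset.mem_sdiff.1 (hCU hc)).2
    have hdu : G.degree u = (G.neighborFinset u ∩ I).card + s.card := hdsplit u
    have hdw : G.degree w = (G.neighborFinset w ∩ I).card + t.card := hdsplit w
    have hpu := hclosed u huI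
    have hpw := hclosed w hwI
    have hst_sub : s ∪ t ⊆ (univ \ I) \ {u, w} := by
      intro z hz
      have hzI : z ∉ I := by
        rcases Finset.mem_union.1 hz with h | h
        · exact (Finset.mem_sdiff.1 h).2
        · exact (Finset.mem_sdiff.1 h).2
      have hzu : z ≠ u := by
        rintro rfl
        rcases Finset.mem_union.1 hz with h | h
        · exact G.irrefl (hadjs z h)
        · exact hnadj' (hadjt z h)
      have hzw : z ≠ w := by
        rintro rfl
        rcases Finset.mem_union.1 hz with h | h
        · exact hnadj (hadjs z h)
        · exact G.irrefl (hadjt z h)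
      refine Finset.mem_sdiff.2 ⟨Finset.mem_sdiff.2 ⟨Finset.mem_univ z, hzI⟩, ?_⟩
      simp only [Finset.mem_insert, Finset.mem_singleton]
      push_neg
      exact ⟨hzu, hzw⟩
    have huwsub : ({u, w} : Finset V) ⊆ univ \ I := by
      intro z hz
      rw [Finset.mem_insert, Finset.mem_singleton] at hz
      rcases hz with rfl | rfl
      · exact hu
      · exact hw
    have hM2 : ((univ \ I) \ {u, w}).card + 2 = (univ \ I).card := by
      rw [Finset.card_sdiff_of_subset huwsub, Finset.card_pair huw]
      have := Finset.card_le_card huwsub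
      rw [Finset.card_pair huw] at this
      omega
    have hcount : C.card + (s ∪ t).card = s.card + t.card :=
      Finset.card_inter_add_card_union s t
    have hstcard := Finset.card_le_card hst_sub
    have hore := hdeg u w huw hnadj
    set J : Finset V := bootClosure G 2 {u, w} with hJ_def
    have hJfix : bootStep G 2 J = J := bootClosure_fixed G 2 _
    have hJcard : J.card ≤ I.card := hImax _ (Finset.card_pair huw)
    have huJ : u ∈ J := subset_bootClosure G 2 _ (Finset.mem_insert_self u {w})
    have hwJ : w ∈ J := subset_bootClosure G 2 _ (by simp)
    have hCJ : ∀ c ∈ C, c ∈ J := fun c hc =>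
      mem_of_closed_two G hJfix huJ hwJ huw (hadjCu c hc).symm (hadjCw c hc).symm
    have huC : u ∉ C := fun h => G.irrefl (hadjCu u h)
    have hwC : w ∉ C := fun h => G.irrefl (hadjCw w h)
    set D : Finset V := insert u (insert w C) with hD_def
    have hDcard : D.card = C.card + 2 := by
      rw [hD_def, Finset.card_insert_of_notMem, Finset.card_insert_of_notMem hwC]
      simp only [Finset.mem_insert]
      push_neg
      exact ⟨huw, huC⟩
    have hDJ : D ⊆ J := by
      intro z hz
      rw [hD_def, Finset.mem_insert, Finset.mem_insert] at hz
      rcases hz with rfl | rfl | h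
      · exact huJ
      · exact hwJ
      · exact hCJ z h
    have hDJle : C.card + 2 ≤ J.card := by
      rw [← hDcard]
      exact Finset.card_le_card hDJ
    -- forced equalities
    have hCeq : C.card + 2 = I.card := by omega
    have hNuI : (G.neighborFinset u ∩ I).card = 1 := by omega
    have hNwI : (G.neighborFinset w ∩ I).card = 1 := by omega
    have hUneq : (s ∪ t).card + 2 = (univ \ I).card := by omega
    have hst_eq : s ∪ t = (univ \ I) \ {u, w} :=
      Finset.eq_of_subset_of_card_le hst_sub (by omega)
    have hJD : D = J := Finset.eq_of_subset_of_card_le hDJ (by omega)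
    obtain ⟨a, ha⟩ := Finset.card_eq_one.1 hNuI
    have haNI : a ∈ G.neighborFinset u ∩ I := ha ▸ Finset.mem_singleton_self a
    have haI : a ∈ I := (Finset.mem_inter.1 haNI).2
    have hadj_ua : G.Adj u a := (G.mem_neighborFinset u a).1 (Finset.mem_inter.1 haNI).1
    set X : Finset V := s \ t with hX_def
    set Y : Finset V := t \ s with hY_def
    have hXcard : X.card + C.card = s.card := Finset.card_sdiff_add_card_inter s t
    have hYcard : Y.card + C.card = t.card := by
      have h := Finset.card_sdiff_add_card_inter t s
      rwa [Finset.inter_comm t s, ← hC_def] at h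
    have hXYdisj : Disjoint X Y := by
      rw [Finset.disjoint_left]
      intro z hz hz'
      exact (Finset.mem_sdiff.1 hz).2 (Finset.mem_sdiff.1 hz').1
    have hXfacts : ∀ x ∈ X, G.Adj u x ∧ ¬ G.Adj w x ∧ x ∉ I ∧ x ∉ J := by
      intro x hx
      obtain ⟨hxs, hxt⟩ := Finset.mem_sdiff.1 hx
      have hadj : G.Adj u x := hadjs x hxs
      have hxI : x ∉ I := (Finset.mem_sdiff.1 hxs).2
      have hnw : ¬ G.Adj w x := fun h =>
        hxt (Finset.mem_sdiff.2 ⟨(G.mem_neighborFinset w x).2 h, hxI⟩)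
      have hxJ : x ∉ J := by
        rw [← hJD, hD_def]
        intro h
        rw [Finset.mem_insert, Finset.mem_insert] at h
        rcases h with rfl | rfl | h
        · exact G.irrefl hadj
        · exact hnadj hadj
        · exact hxt (Finset.mem_inter.1 h).2
      exact ⟨hadj, hnw, hxI, hxJ⟩
    have hYfacts : ∀ y ∈ Y, G.Adj w y ∧ ¬ G.Adj u y ∧ y ∉ I ∧ y ∉ J := by
      intro y hy
      obtain ⟨hyt, hys⟩ := Finset.mem_sdiff.1 hy
      have hadj : G.Adj w y := hadjt y hyt
      have hyI : y ∉ I := (Finset.mem_sdiff.1 hyt).2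
      have hnu : ¬ G.Adj u y := fun h =>
        hys (Finset.mem_sdiff.2 ⟨(G.mem_neighborFinset u y).2 h, hyI⟩)
      have hyJ : y ∉ J := by
        rw [← hJD, hD_def]
        intro h
        rw [Finset.mem_insert, Finset.mem_insert] at h
        rcases h with rfl | rfl | h
        · exact hnadj' hadj
        · exact G.irrefl hadj
        · exact hys (Finset.mem_inter.1 h).1
      exact ⟨hadj, hnu, hyI, hyJ⟩
    have hXC : ∀ x ∈ X, ∀ c ∈ C, ¬ G.Adj x c := by
      intro x hx c hc hadj
      obtain ⟨hadj_ux, _, _, hxJ⟩ := hXfacts x hx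
      have hcu : u ≠ c := fun h => huC (h ▸ hc)
      exact hxJ (mem_of_closed_two G hJfix huJ (hCJ c hc) hcu hadj_ux.symm hadj)
    have hYC : ∀ y ∈ Y, ∀ c ∈ C, ¬ G.Adj y c := by
      intro y hy c hc hadj
      obtain ⟨hadj_wy, _, _, hyJ⟩ := hYfacts y hy
      have hcw : w ≠ c := fun h => hwC (h ▸ hc)
      exact hyJ (mem_of_closed_two G hJfix hwJ (hCJ c hc) hcw hadj_wy.symm hadj)
    have hXdegb : ∀ x ∈ X, G.degree x + I.card ≤ (univ \ I).card + 1 := by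
      intro x hx
      obtain ⟨hadj_ux, hnwx, hxI, hxJ⟩ := hXfacts x hx
      have hxw : x ≠ w := by rintro rfl; exact hnadj hadj_ux
      have hxC : x ∉ C := fun h => (Finset.mem_sdiff.1 hx).2 (Finset.mem_inter.1 h).2
      have hT'card : (insert x (insert w C) : Finset V).card = C.card + 2 := by
        rw [Finset.card_insert_of_notMem, Finset.card_insert_of_notMem hwC]
        simp only [Finset.mem_insert]
        push_neg
        exact ⟨hxw, hxC⟩
      have hT'sub : (insert x (insert w C) : Finset V) ⊆ univ \ I := by
        intro z hz
        rw [Finset.mem_insert, Finset.mem_insert] at hz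
        rcases hz with rfl | rfl | h
        · exact Finset.mem_sdiff.2 ⟨Finset.mem_univ z, hxI⟩
        · exact hw
        · exact hCU h
      have hsub2 : G.neighborFinset x \ I ⊆ (univ \ I) \ insert x (insert w C) := by
        intro z hz
        obtain ⟨hzN, hzI⟩ := Finset.mem_sdiff.1 hz
        have hzadj : G.Adj x z := (G.mem_neighborFinset x z).1 hzN
        refine Finset.mem_sdiff.2 ⟨Finset.mem_sdiff.2 ⟨Finset.mem_univ z, hzI⟩, ?_⟩
        rw [Finset.mem_insert, Finset.mem_insert]
        push_neg
        exact ⟨fun h => G.irrefl (h ▸ hzadj), fun h => hnwx (h ▸ hzadj).symm,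
          fun h => hXC x hx z h hzadj⟩
      have h3 := Finset.card_le_card hsub2
      have h4 : ((univ \ I) \ insert x (insert w C)).card + (insert x (insert w C) : Finset V).card
          = (univ \ I).card := by
        rw [Finset.card_sdiff_of_subset hT'sub]
        have := Finset.card_le_card hT'sub
        omega
      have h5 := hdsplit x
      have h6 := hclosed x hxI
      omega
    have hYdegb : ∀ y ∈ Y, G.degree y + I.card ≤ (univ \ I).card + 1 := by
      intro y hy
      obtain ⟨hadj_wy, hnuy, hyI, hyJ⟩ := hYfacts y hy
      have hyu : y ≠ u := by rintro rfl; exact hnadj' hadj_wy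
      have hyC : y ∉ C := fun h => (Finset.mem_sdiff.1 hy).2 (Finset.mem_inter.1 h).1
      have hT'card : (insert y (insert u C) : Finset V).card = C.card + 2 := by
        rw [Finset.card_insert_of_notMem, Finset.card_insert_of_notMem huC]
        simp only [Finset.mem_insert]
        push_neg
        exact ⟨hyu, hyC⟩
      have hT'sub : (insert y (insert u C) : Finset V) ⊆ univ \ I := by
        intro z hz
        rw [Finset.mem_insert, Finset.mem_insert] at hz
        rcases hz with rfl | rfl | h
        · exact Finset.mem_sdiff.2 ⟨Finset.mem_univ z, hyI⟩
        · exact hu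
        · exact hCU h
      have hsub2 : G.neighborFinset y \ I ⊆ (univ \ I) \ insert y (insert u C) := by
        intro z hz
        obtain ⟨hzN, hzI⟩ := Finset.mem_sdiff.1 hz
        have hzadj : G.Adj y z := (G.mem_neighborFinset y z).1 hzN
        refine Finset.mem_sdiff.2 ⟨Finset.mem_sdiff.2 ⟨Finset.mem_univ z, hzI⟩, ?_⟩
        rw [Finset.mem_insert, Finset.mem_insert]
        push_neg
        exact ⟨fun h => G.irrefl (h ▸ hzadj), fun h => hnuy (h ▸ hzadj).symm,
          fun h => hYC y hy z h hzadj⟩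
      have h3 := Finset.card_le_card hsub2
      have h4 : ((univ \ I) \ insert y (insert u C)).card + (insert y (insert u C) : Finset V).card
          = (univ \ I).card := by
        rw [Finset.card_sdiff_of_subset hT'sub]
        have := Finset.card_le_card hT'sub
        omega
      have h5 := hdsplit y
      have h6 := hclosed y hyI
      omega
    have hclaimX : ∀ x ∈ X, I.card ≤ Y.card + 2 := by
      intro x hx
      obtain ⟨hadj_ux, hnwx, hxI, hxJ⟩ := hXfacts x hx
      have hxw : x ≠ w := by rintro rfl; exact hnadj hadj_ux
      have hore2 := hdeg x w hxw (fun h => hnwx h.symm)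
      have := hXdegb x hx
      omega
    have hclaimY : ∀ y ∈ Y, I.card ≤ X.card + 2 := by
      intro y hy
      obtain ⟨hadj_wy, hnuy, hyI, hyJ⟩ := hYfacts y hy
      have hyu : y ≠ u := by rintro rfl; exact hnadj' hadj_wy
      have hore2 := hdeg y u hyu (fun h => hnuy h.symm)
      have := hYdegb y hy
      omega
    have hCnbr : ∀ c ∈ C, ∀ z, z ∈ G.neighborFinset c \ I → z = u ∨ z = w ∨ z ∈ C := by
      intro c hc z hz
      obtain ⟨hzN, hzI⟩ := Finset.mem_sdiff.1 hz
      have hadj : G.Adj c z := (G.mem_neighborFinset c z).1 hzN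
      by_cases hzu : z = u
      · exact Or.inl hzu
      by_cases hzw : z = w
      · exact Or.inr (Or.inl hzw)
      have hzst : z ∈ s ∪ t := by
        rw [hst_eq]
        refine Finset.mem_sdiff.2 ⟨Finset.mem_sdiff.2 ⟨Finset.mem_univ z, hzI⟩, ?_⟩
        simp only [Finset.mem_insert, Finset.mem_singleton]
        push_neg
        exact ⟨hzu, hzw⟩
      right; right
      rcases Finset.mem_union.1 hzst with h | h
      · by_cases hzt : z ∈ t
        · exact Finset.mem_inter.2 ⟨h, hzt⟩
        · exact absurd hadj.symm (hXC z (Finset.mem_sdiff.2 ⟨h, hzt⟩) c hc)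
      · by_cases hzs : z ∈ s
        · exact Finset.mem_inter.2 ⟨hzs, h⟩
        · exact absurd hadj.symm (hYC z (Finset.mem_sdiff.2 ⟨h, hzs⟩) c hc)
    by_cases hk4 : 4 ≤ I.card
    · by_cases hCedge : ∃ c₁ ∈ C, ∃ c₂ ∈ C, G.Adj c₁ c₂
      · obtain ⟨c₁, hc₁, c₂, hc₂, hadj12⟩ := hCedge
        have hac : a ≠ c₁ := fun h => hCI c₁ hc₁ (h ▸ haI)
        set K : Finset V := bootClosure G 2 {a, c₁} with hK_def
        have hKfix : bootStep G 2 K = K := bootClosure_fixed G 2 _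
        have haK : a ∈ K := subset_bootClosure G 2 _ (Finset.mem_insert_self a {c₁})
        have hc₁K : c₁ ∈ K := subset_bootClosure G 2 _ (by simp)
        have huK : u ∈ K :=
          mem_of_closed_two G hKfix haK hc₁K hac hadj_ua (hadjCu c₁ hc₁)
        have huc₁ : u ≠ c₁ := fun h => huC (h ▸ hc₁)
        have hc₂K : c₂ ∈ K :=
          mem_of_closed_two G hKfix huK hc₁K huc₁ (hadjCu c₂ hc₂).symm hadj12.symm
        have hc12 : c₁ ≠ c₂ := G.ne_of_adj hadj12
        have hwK : w ∈ K :=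
          mem_of_closed_two G hKfix hc₁K hc₂K hc12 (hadjCw c₁ hc₁) (hadjCw c₂ hc₂)
        have hCK : ∀ c ∈ C, c ∈ K := fun c hc =>
          mem_of_closed_two G hKfix huK hwK huw (hadjCu c hc).symm (hadjCw c hc).symm
        have haD : a ∉ D := by
          intro h
          rw [hD_def, Finset.mem_insert, Finset.mem_insert] at h
          rcases h with rfl | rfl | h
          · exact huI haI
          · exact hwI haI
          · exact hCI a h haI
        have hsubK : insert a D ⊆ K := by
          intro z hz
          rw [Finset.mem_insert] at hz
          rcases hz with rfl | hz
          · exact haK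
          rw [hD_def, Finset.mem_insert, Finset.mem_insert] at hz
          rcases hz with rfl | rfl | hz
          · exact huK
          · exact hwK
          · exact hCK z hz
        have h1 : (insert a D).card = D.card + 1 := Finset.card_insert_of_notMem haD
        have h2 := Finset.card_le_card hsubK
        have h3 : K.card ≤ I.card := hImax _ (Finset.card_pair hac)
        omega
      · push_neg at hCedge
        have h2C : 1 < C.card := by omega
        obtain ⟨c₁, hc₁, c₂, hc₂, hc12⟩ := Finset.one_lt_card.1 h2C
        have hCdeg3 : ∀ c ∈ C, G.degree c ≤ 3 := by
          intro c hc
          have hsub : G.neighborFinset c \ I ⊆ ({u, w} : Finset V) := by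
            intro z hz
            rcases hCnbr c hc z hz with rfl | rfl | h
            · exact Finset.mem_insert_self _ _
            · simp
            · exact absurd ((G.mem_neighborFinset c z).1 (Finset.mem_sdiff.1 hz).1)
                (hCedge c hc z h)
          have h1 := Finset.card_le_card hsub
          rw [Finset.card_pair huw] at h1
          have h2 := hdsplit c
          have h3 := hclosed c (hCI c hc)
          omega
        have hore3 := hdeg c₁ c₂ hc12 (hCedge c₁ hc₁ c₂ hc₂)
        have hd1 := hCdeg3 c₁ hc₁
        have hd2 := hCdeg3 c₂ hc₂
        omega
    · have hkeq : I.card = 3 := by omega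
      have hC1 : C.card = 1 := by omega
      obtain ⟨c₀, hc₀⟩ := Finset.card_eq_one.1 hC1
      have hc₀C : c₀ ∈ C := hc₀ ▸ Finset.mem_singleton_self c₀
      have hdc₀ : G.degree c₀ ≤ 3 := by
        have hsub : G.neighborFinset c₀ \ I ⊆ ({u, w} : Finset V) := by
          intro z hz
          rcases hCnbr c₀ hc₀C z hz with rfl | rfl | h
          · exact Finset.mem_insert_self _ _
          · simp
          · rw [hc₀, Finset.mem_singleton] at h
            subst h
            exact absurd ((G.mem_neighborFinset z z).1 (Finset.mem_sdiff.1 hz).1) (G.irrefl)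
        have h1 := Finset.card_le_card hsub
        rw [Finset.card_pair huw] at h1
        have h2 := hdsplit c₀
        have h3 := hclosed c₀ (hCI c₀ hc₀C)
        omega
      have hXn : X.Nonempty := by
        rw [← Finset.card_pos]
        by_contra h
        push_neg at h
        have hY0 : 0 < Y.card := by omega
        obtain ⟨y, hy⟩ := Finset.card_pos.1 hY0
        have := hclaimY y hy
        omega
      have hYn : Y.Nonempty := by
        rw [← Finset.card_pos]
        obtain ⟨x, hx⟩ := hXn
        have := hclaimX x hx
        omega
      have hxfull : ∀ x' ∈ X,
          G.neighborFinset x' \ I = (univ \ I) \ insert x' (insert w {c₀}) := by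
        intro x' hx'
        obtain ⟨hadj_ux', hnwx', hx'I, hx'J⟩ := hXfacts x' hx'
        have hx'w : x' ≠ w := by rintro rfl; exact hnadj hadj_ux'
        have hx'c₀ : x' ≠ c₀ := by
          rintro rfl
          exact (Finset.mem_sdiff.1 hx').2 (Finset.mem_inter.1 hc₀C).2
        have hwc₀ : w ≠ c₀ := fun h => hwC (h ▸ hc₀C)
        have hTsub : (insert x' (insert w {c₀}) : Finset V) ⊆ univ \ I := by
          intro z hz
          rw [Finset.mem_insert, Finset.mem_insert, Finset.mem_singleton] at hz
          rcases hz with rfl | rfl | rfl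
          · exact Finset.mem_sdiff.2 ⟨Finset.mem_univ z, hx'I⟩
          · exact hw
          · exact hCU hc₀C
        have hTcard : (insert x' (insert w {c₀}) : Finset V).card = 3 := by
          rw [Finset.card_insert_of_notMem, Finset.card_pair hwc₀]
          simp only [Finset.mem_insert, Finset.mem_singleton]
          push_neg
          exact ⟨hx'w, hx'c₀⟩
        have hsubA : G.neighborFinset x' \ I ⊆ (univ \ I) \ insert x' (insert w {c₀}) := by
          intro z hz
          obtain ⟨hzN, hzI⟩ := Finset.mem_sdiff.1 hz
          have hzadj : G.Adj x' z := (G.mem_neighborFinset x' z).1 hzN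
          refine Finset.mem_sdiff.2 ⟨Finset.mem_sdiff.2 ⟨Finset.mem_univ z, hzI⟩, ?_⟩
          rw [Finset.mem_insert, Finset.mem_insert, Finset.mem_singleton]
          push_neg
          exact ⟨fun h => G.irrefl (h ▸ hzadj), fun h => hnwx' (h ▸ hzadj).symm,
            fun h => hXC x' hx' c₀ hc₀C (h ▸ hzadj)⟩
        have hore4 := hdeg x' c₀ hx'c₀ (hXC x' hx' c₀ hc₀C)
        have h5 := hdsplit x'
        have h6 := hclosed x' hx'I
        have h7 := Finset.card_le_card hsubA
        have h8 : ((univ \ I) \ insert x' (insert w {c₀})).card + 3 = (univ \ I).card := by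
          rw [Finset.card_sdiff_of_subset hTsub, hTcard]
          have := Finset.card_le_card hTsub
          rw [hTcard] at this
          omega
        exact Finset.eq_of_subset_of_card_le hsubA (by omega)
      have hyfull : ∀ y' ∈ Y,
          G.neighborFinset y' \ I = (univ \ I) \ insert y' (insert u {c₀}) := by
        intro y' hy'
        obtain ⟨hadj_wy', hnuy', hy'I, hy'J⟩ := hYfacts y' hy'
        have hy'u : y' ≠ u := by rintro rfl; exact hnadj' hadj_wy'
        have hy'c₀ : y' ≠ c₀ := by
          rintro rfl
          exact (Finset.mem_sdiff.1 hy').2 (Finset.mem_inter.1 hc₀C).1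
        have huc₀ : u ≠ c₀ := fun h => huC (h ▸ hc₀C)
        have hTsub : (insert y' (insert u {c₀}) : Finset V) ⊆ univ \ I := by
          intro z hz
          rw [Finset.mem_insert, Finset.mem_insert, Finset.mem_singleton] at hz
          rcases hz with rfl | rfl | rfl
          · exact Finset.mem_sdiff.2 ⟨Finset.mem_univ z, hy'I⟩
          · exact hu
          · exact hCU hc₀C
        have hTcard : (insert y' (insert u {c₀}) : Finset V).card = 3 := by
          rw [Finset.card_insert_of_notMem, Finset.card_pair huc₀]
          simp only [Finset.mem_insert, Finset.mem_singleton]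
          push_neg
          exact ⟨hy'u, hy'c₀⟩
        have hsubA : G.neighborFinset y' \ I ⊆ (univ \ I) \ insert y' (insert u {c₀}) := by
          intro z hz
          obtain ⟨hzN, hzI⟩ := Finset.mem_sdiff.1 hz
          have hzadj : G.Adj y' z := (G.mem_neighborFinset y' z).1 hzN
          refine Finset.mem_sdiff.2 ⟨Finset.mem_sdiff.2 ⟨Finset.mem_univ z, hzI⟩, ?_⟩
          rw [Finset.mem_insert, Finset.mem_insert, Finset.mem_singleton]
          push_neg
          exact ⟨fun h => G.irrefl (h ▸ hzadj), fun h => hnuy' (h ▸ hzadj).symm,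
            fun h => hYC y' hy' c₀ hc₀C (h ▸ hzadj)⟩
        have hore4 := hdeg y' c₀ hy'c₀ (hYC y' hy' c₀ hc₀C)
        have h5 := hdsplit y'
        have h6 := hclosed y' hy'I
        have h7 := Finset.card_le_card hsubA
        have h8 : ((univ \ I) \ insert y' (insert u {c₀})).card + 3 = (univ \ I).card := by
          rw [Finset.card_sdiff_of_subset hTsub, hTcard]
          have := Finset.card_le_card hTsub
          rw [hTcard] at this
          omega
        exact Finset.eq_of_subset_of_card_le hsubA (by omega)
      obtain ⟨x, hx⟩ := hXn
      obtain ⟨y, hy⟩ := hYn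
      have hxy : x ≠ y := fun h => Finset.disjoint_left.1 hXYdisj hx (h ▸ hy)
      set K : Finset V := bootClosure G 2 {x, y} with hK_def
      have hKfix : bootStep G 2 K = K := bootClosure_fixed G 2 _
      have hxK : x ∈ K := subset_bootClosure G 2 _ (Finset.mem_insert_self x {y})
      have hyK : y ∈ K := subset_bootClosure G 2 _ (by simp)
      have hadjfromX : ∀ x' ∈ X, ∀ z ∈ (univ \ I : Finset V),
          z ≠ x' → z ≠ w → z ≠ c₀ → G.Adj x' z := by
        intro x' hx' z hz h1 h2 h3
        have hmem : z ∈ G.neighborFinset x' \ I := by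
          rw [hxfull x' hx']
          refine Finset.mem_sdiff.2 ⟨hz, ?_⟩
          rw [Finset.mem_insert, Finset.mem_insert, Finset.mem_singleton]
          push_neg
          exact ⟨h1, h2, h3⟩
        exact (G.mem_neighborFinset x' z).1 (Finset.mem_sdiff.1 hmem).1
      have hadjfromY : ∀ y' ∈ Y, ∀ z ∈ (univ \ I : Finset V),
          z ≠ y' → z ≠ u → z ≠ c₀ → G.Adj y' z := by
        intro y' hy' z hz h1 h2 h3
        have hmem : z ∈ G.neighborFinset y' \ I := by
          rw [hyfull y' hy']
          refine Finset.mem_sdiff.2 ⟨hz, ?_⟩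
          rw [Finset.mem_insert, Finset.mem_insert, Finset.mem_singleton]
          push_neg
          exact ⟨h1, h2, h3⟩
        exact (G.mem_neighborFinset y' z).1 (Finset.mem_sdiff.1 hmem).1
      have hsubXY : X ∪ Y ⊆ K := by
        intro z hz
        rcases Finset.mem_union.1 hz with hzX | hzY
        · by_cases hzx : z = x
          · exact hzx ▸ hxK
          · have hzs' : z ∈ s := (Finset.mem_sdiff.1 hzX).1
            have hzU : z ∈ univ \ I := hsU hzs'
            have hzw : z ≠ w := by rintro rfl; exact hnadj (hadjs _ hzs')
            have hzc₀ : z ≠ c₀ := by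
              rintro rfl
              exact (Finset.mem_sdiff.1 hzX).2 (Finset.mem_inter.1 hc₀C).2
            have hzu' : z ≠ u := fun h => G.irrefl (h ▸ hadjs z hzs')
            have hzy : z ≠ y := fun h => Finset.disjoint_left.1 hXYdisj hzX (h ▸ hy)
            have ha1 : G.Adj x z := hadjfromX x hx z hzU hzx hzw hzc₀
            have ha2 : G.Adj y z := hadjfromY y hy z hzU hzy hzu' hzc₀
            exact mem_of_closed_two G hKfix hxK hyK hxy ha1.symm ha2.symm
        · by_cases hzy : z = y
          · exact hzy ▸ hyK
          · have hzt' : z ∈ t := (Finset.mem_sdiff.1 hzY).1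
            have hzU : z ∈ univ \ I := htU hzt'
            have hzu : z ≠ u := by rintro rfl; exact hnadj' (hadjt _ hzt')
            have hzc₀ : z ≠ c₀ := by
              rintro rfl
              exact (Finset.mem_sdiff.1 hzY).2 (Finset.mem_inter.1 hc₀C).1
            have hzw' : z ≠ w := fun h => G.irrefl (h ▸ hadjt z hzt')
            have hzx : z ≠ x := fun h => Finset.disjoint_left.1 hXYdisj (h ▸ hx) hzY
            have ha1 : G.Adj x z := hadjfromX x hx z hzU hzx hzw' hzc₀
            have ha2 : G.Adj y z := hadjfromY y hy z hzU hzy hzu hzc₀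
            exact mem_of_closed_two G hKfix hxK hyK hxy ha1.symm ha2.symm
      have hcardXY : (X ∪ Y).card = X.card + Y.card := Finset.card_union_of_disjoint hXYdisj
      have h2 := Finset.card_le_card hsubXY
      have h3 : K.card ≤ I.card := hImax _ (Finset.card_pair hxy)
      omega
  have hhalf : Fintype.card V < 2 * I.card := by
    by_contra hle
    push_neg at hle
    have hUfpos : 0 < (univ \ I : Finset V).card := by omega
    obtain ⟨v₀, hv₀⟩ := Finset.card_pos.1 hUfpos
    have hv₀I : v₀ ∉ I := (Finset.mem_sdiff.1 hv₀).2
    have hIpos : 0 < I.card := by omega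
    obtain ⟨i₀, hi₀⟩ := Finset.card_pos.1 hIpos
    obtain ⟨wk⟩ := hconn.preconnected i₀ v₀
    obtain ⟨p, q, hpq, hpI, hqI⟩ := walk_cross G wk hi₀ hv₀I
    have hqU : q ∈ (univ \ I : Finset V) := Finset.mem_sdiff.2 ⟨Finset.mem_univ q, hqI⟩
    have herase : 0 < ((univ \ I : Finset V).erase q).card := by
      rw [Finset.card_erase_of_mem hqU]
      omega
    obtain ⟨w', hw'⟩ := Finset.card_pos.1 herase
    have hw'q : w' ≠ q := Finset.ne_of_mem_erase hw'
    have hw'U : w' ∈ (univ \ I : Finset V) := Finset.mem_of_mem_erase hw'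
    have hw'I : w' ∉ I := (Finset.mem_sdiff.1 hw'U).2
    have hpw' : p ≠ w' := fun h => hw'I (h ▸ hpI)
    set K : Finset V := bootClosure G 2 {p, w'} with hK_def
    have hKfix : bootStep G 2 K = K := bootClosure_fixed G 2 _
    have hpK : p ∈ K := subset_bootClosure G 2 _ (Finset.mem_insert_self p {w'})
    have hw'K : w' ∈ K := subset_bootClosure G 2 _ (by simp)
    have hqK : q ∈ K :=
      mem_of_closed_two G hKfix hpK hw'K hpw' hpq.symm
        (hclique q hqU w' hw'U (Ne.symm hw'q))
    have hUK : (univ \ I : Finset V) ⊆ K := by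
      intro z hz
      by_cases hzq : z = q
      · exact hzq ▸ hqK
      by_cases hzw' : z = w'
      · exact hzw' ▸ hw'K
      exact mem_of_closed_two G hKfix hqK hw'K (Ne.symm hw'q)
        (hclique z hz q hqU hzq) (hclique z hz w' hw'U hzw')
    have hsubK : insert p (univ \ I : Finset V) ⊆ K := by
      intro z hz
      rw [Finset.mem_insert] at hz
      rcases hz with rfl | hz
      · exact hpK
      · exact hUK hz
    have hpU : p ∉ (univ \ I : Finset V) := fun h => (Finset.mem_sdiff.1 h).2 hpI
    have h1 : (insert p (univ \ I : Finset V)).card = (univ \ I : Finset V).card + 1 :=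
      Finset.card_insert_of_notMem hpU
    have h2 := Finset.card_le_card hsubK
    have h3 : K.card ≤ I.card := hImax _ (Finset.card_pair hpw')
    omega
  exact ⟨hhalf, hclique⟩
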